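/- Let G = (V,E) be a finite connected simple graph with nullity n = |E| - |V| + 1. Then Σ_{s ⊆ E} Π_{i ∈ V} f_{deg_s(i)}(1) = ((5-√5)/2)^{n-1} + ((5+√5)/2)^{n-1}, where the powers with integer exponent n-1 are taken in ℝ (zpow). -/

import Mathlib

open Polynomial

/-- The polynomials `f₀ = 1`, `f₁ = 0`, `f_{n+1}(x) = x·f_n(x) + f_{n-1}(x)`. -/
noncomputable def isingF : ℕ → Polynomial ℤ
  | 0 => 1
  | 1 => 0
  | n + 2 => X * isingF (n + 1) + isingF n

/-- The degree of vertex `i` in the spanning subgraph `(V, s)`. -/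
def degIn {V : Type*} [DecidableEq V] (s : Finset (Sym2 V)) (i : V) : ℕ :=
  (s.filter (fun e => i ∈ e)).card

/-! With `r₁ r₂ = -1` and `r₁ + r₂ = x`, Binet's formula reads
`f_d(x) = Σ_j r_j ^ d / (1 + r_j ^ 2)`. Expanding the product over the vertices turns the sum into
one over colourings `σ : V → Fin 2`; for fixed `σ`, the sum over `s ⊆ E` factors as
`∏_{uv ∈ E} (1 + r_{σ u} r_{σ v})`, which vanishes as soon as some edge is bichromatic, since
`1 + r₁ r₂ = 0`. On a connected graph only the two constant colourings survive, contributing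
`(1 + r_j ^ 2) ^ (|E| - |V|)`. At `x = 1` the roots are `(1 ∓ √5) / 2` and
`1 + r_j ^ 2 = (5 ∓ √5) / 2`. -/

open Finset

theorem aeval_isingF {K : Type*} [Field K] {r₁ r₂ : K} (hr : r₁ * r₂ = -1)
    (h₁ : 1 + r₁ ^ 2 ≠ 0) (h₂ : 1 + r₂ ^ 2 ≠ 0) :
    ∀ d, aeval (r₁ + r₂) (isingF d) = r₁ ^ d / (1 + r₁ ^ 2) + r₂ ^ d / (1 + r₂ ^ 2)
  | 0 => by
    field_simp
    simp only [isingF, map_one]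
    linear_combination (r₁ * r₂ - 1) * hr
  | 1 => by
    field_simp
    simp only [isingF, map_zero]
    linear_combination -(r₁ + r₂) * hr
  | d + 2 => by
    rw [isingF, map_add, map_mul, aeval_X, aeval_isingF hr h₁ h₂ (d + 1),
      aeval_isingF hr h₁ h₂ d]
    linear_combination (r₁ ^ d / (1 + r₁ ^ 2) + r₂ ^ d / (1 + r₂ ^ 2)) * hr

section
variable {V : Type*}

theorem SimpleGraph.Preconnected.exists_adj_ne {G : SimpleGraph V} (hG : G.Preconnected)
    {ι : Type*} {σ : V → ι} {u v : V} (h : σ u ≠ σ v) : ∃ x y, G.Adj x y ∧ σ x ≠ σ y := by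
  obtain ⟨p⟩ := hG u v
  obtain ⟨d, -, hd, hd'⟩ := p.exists_boundary_dart {x | σ x = σ u} rfl (Ne.symm h)
  exact ⟨d.fst, d.snd, d.adj, fun h' => hd' (h'.symm.trans hd)⟩

variable [Fintype V] [DecidableEq V]

theorem prod_pow_degIn {M : Type*} [CommMonoid M] (c : V → M) (s : Finset (Sym2 V)) :
    ∏ i, c i ^ degIn s i = ∏ e ∈ s, ∏ i with i ∈ e, c i := by
  rw [prod_comm' (t' := univ) (s' := fun i => s.filter (i ∈ ·)) (by simp)]
  simp [degIn]

theorem sum_powerset_prod_pow_degIn {R : Type*} [CommSemiring R] (c : V → R)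
    (E : Finset (Sym2 V)) :
    ∑ s ∈ E.powerset, ∏ i, c i ^ degIn s i = ∏ e ∈ E, (1 + ∏ i with i ∈ e, c i) := by
  simp only [prod_pow_degIn, prod_one_add]

theorem prod_filter_mem_sym2_mk {M : Type*} [CommMonoid M] (c : V → M) {x y : V} (h : x ≠ y) :
    ∏ i with i ∈ s(x, y), c i = c x * c y := by
  rw [← prod_pair h]; congr 1; ext; simp

theorem sum_pi_eq_sum_const {ι M : Type*} [Nonempty V] [Fintype ι] [AddCommMonoid M]
    (g : (V → ι) → M) (hg : ∀ σ : V → ι, ∀ u v, σ u ≠ σ v → g σ = 0) :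
    ∑ σ, g σ = ∑ j, g (fun _ => j) := by
  let const : ι ↪ (V → ι) := ⟨Function.const V, Function.const_injective⟩
  calc ∑ σ, g σ = ∑ σ ∈ univ.map const, g σ := by
        refine (sum_subset (subset_univ _) fun σ _ hσ => ?_).symm
        obtain ⟨v₀⟩ := ‹Nonempty V›
        by_contra hne
        refine hσ (mem_map.2 ⟨σ v₀, mem_univ _, funext fun u => ?_⟩)
        by_contra hu
        exact hne (hg σ u v₀ (Ne.symm hu))
    _ = ∑ j, g (fun _ => j) := sum_map _ _ _

variable {G : SimpleGraph V} [DecidableRel G.Adj]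

theorem prod_edgeFinset_one_add_eq_zero (hG : G.Preconnected) {R ι : Type*} [CommSemiring R]
    (r : ι → R) (hr : ∀ a b, a ≠ b → 1 + r a * r b = 0) (σ : V → ι) {u v : V}
    (h : σ u ≠ σ v) : ∏ e ∈ G.edgeFinset, (1 + ∏ i with i ∈ e, r (σ i)) = 0 := by
  obtain ⟨x, y, hxy, hne⟩ := hG.exists_adj_ne h
  refine prod_eq_zero (G.mem_edgeFinset.2 (G.mem_edgeSet.2 hxy)) ?_
  rw [prod_filter_mem_sym2_mk _ hxy.ne]
  exact hr _ _ hne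

theorem prod_edgeFinset_one_add_const {R : Type*} [CommSemiring R] (a : R) :
    ∏ e ∈ G.edgeFinset, (1 + ∏ i with i ∈ e, a) = (1 + a ^ 2) ^ #G.edgeFinset := by
  refine (prod_congr rfl fun e he => ?_).trans (prod_const _)
  induction e using Sym2.ind with
  | _ u v => rw [prod_filter_mem_sym2_mk _ (G.mem_edgeFinset.1 he).ne, sq]

theorem sum_powerset_edgeFinset_prod_aeval_isingF {K : Type*} [Field K]
    (hG : G.Connected) {r₁ r₂ : K} (hr : r₁ * r₂ = -1) (h₁ : 1 + r₁ ^ 2 ≠ 0) (h₂ : 1 + r₂ ^ 2 ≠ 0) :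
    ∑ s ∈ G.edgeFinset.powerset, ∏ i, aeval (r₁ + r₂) (isingF (degIn s i))
      = (1 + r₁ ^ 2) ^ ((#G.edgeFinset : ℤ) - Fintype.card V)
        + (1 + r₂ ^ 2) ^ ((#G.edgeFinset : ℤ) - Fintype.card V) := by
  have := hG.nonempty
  set r : Fin 2 → K := ![r₁, r₂]
  have hr' : ∀ a b, a ≠ b → 1 + r a * r b = 0 := by
    intro a b hab
    fin_cases a <;> fin_cases b <;> simp [r] at hab ⊢ <;> linear_combination hr
  calc ∑ s ∈ G.edgeFinset.powerset, ∏ i, aeval (r₁ + r₂) (isingF (degIn s i))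
      = ∑ s ∈ G.edgeFinset.powerset, ∏ i, ∑ j, (1 + r j ^ 2)⁻¹ * r j ^ degIn s i := by
        simp [aeval_isingF hr h₁ h₂, Fin.sum_univ_two, r, div_eq_inv_mul]
    _ = ∑ σ : V → Fin 2, (∏ i, (1 + r (σ i) ^ 2)⁻¹) *
          ∏ e ∈ G.edgeFinset, (1 + ∏ i with i ∈ e, r (σ i)) := by
        simp_rw [Fintype.prod_sum, prod_mul_distrib]
        rw [sum_comm]
        simp_rw [← mul_sum, sum_powerset_prod_pow_degIn]
    _ = ∑ j, ((1 + r j ^ 2)⁻¹) ^ Fintype.card V * (1 + r j ^ 2) ^ #G.edgeFinset := by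
        rw [sum_pi_eq_sum_const _ fun σ u v h => by
          rw [prod_edgeFinset_one_add_eq_zero hG.preconnected r hr' σ h, mul_zero]]
        simp_rw [prod_edgeFinset_one_add_const, prod_const, card_univ]
    _ = _ := by
        simp [Fin.sum_univ_two, r, zpow_sub₀ h₁, zpow_sub₀ h₂, div_eq_inv_mul]
end

theorem theta_one_one {V : Type*} [Fintype V] [DecidableEq V]
    (G : SimpleGraph V) [DecidableRel G.Adj] (hconn : G.Connected)
    (n : ℤ) (hn : n = (G.edgeFinset.card : ℤ) - (Fintype.card V : ℤ) + 1) :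
    ∑ s ∈ G.edgeFinset.powerset, ∏ i : V, Polynomial.aeval (1 : ℝ) (isingF (degIn s i))
      = ((5 - Real.sqrt 5) / 2) ^ (n - 1) + ((5 + Real.sqrt 5) / 2) ^ (n - 1) := by
  have h5 : Real.sqrt 5 ^ 2 = 5 := Real.sq_sqrt (by norm_num)
  have hsum : (1 - Real.sqrt 5) / 2 + (1 + Real.sqrt 5) / 2 = 1 := by ring
  have hprod : (1 - Real.sqrt 5) / 2 * ((1 + Real.sqrt 5) / 2) = -1 := by
    linear_combination (-1 / 4 : ℝ) * h5
  have hA₁ : 1 + ((1 - Real.sqrt 5) / 2) ^ 2 = (5 - Real.sqrt 5) / 2 := by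
    linear_combination (1 / 4 : ℝ) * h5
  have hA₂ : 1 + ((1 + Real.sqrt 5) / 2) ^ 2 = (5 + Real.sqrt 5) / 2 := by
    linear_combination (1 / 4 : ℝ) * h5
  have key := sum_powerset_edgeFinset_prod_aeval_isingF hconn hprod (by positivity) (by positivity)
  rw [hsum, hA₁, hA₂] at key
  rw [key, hn, add_sub_cancel_right]
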